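/- Let c ∈ ℚ with den(c) = d² where d is a positive integer divisible by 4, and let s = |supp(d)| be the number of distinct primes dividing d. Then the set of numerators of rational preperiodic points of φ_c occupies at most 2^s residue classes modulo d. -/

import Mathlib

open Function

private def fc (c : ℚ) : ℚ → ℚ := fun t : ℚ => t ^ 2 - c

private def Preper (c x : ℚ) : Prop :=
  ∃ m : ℕ, ∃ n : ℕ, 1 ≤ n ∧ (fc c)^[n] ((fc c)^[m] x) = (fc c)^[m] x

private lemma preper_step {c x : ℚ} (hx : Preper c x) : Preper c (fc c x) := by
  obtain ⟨m, n, hn, h⟩ := hx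
  refine ⟨m, n, hn, ?_⟩
  have e1 : (fc c)^[m] (fc c x) = fc c ((fc c)^[m] x) := by
    rw [← Function.iterate_succ_apply, Function.iterate_succ_apply']
  rw [e1, ← Function.iterate_succ_apply, Function.iterate_succ_apply', h]

section norms

variable {p : ℕ} [hp : Fact p.Prime] {c : ℚ}

private lemma step_growth {B q : ℚ} (hB : 1 ≤ B) (hc : padicNorm p c ≤ B ^ 2)
    (hq : B < padicNorm p q) : padicNorm p (fc c q) = padicNorm p q ^ 2 := by
  have hq2 : padicNorm p (q ^ 2) = padicNorm p q ^ 2 := by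
    rw [sq, sq, padicNorm.mul]
  have hBB : B ^ 2 < padicNorm p q ^ 2 := by nlinarith
  have hcq : padicNorm p c < padicNorm p (q ^ 2) := by
    rw [hq2]; exact lt_of_le_of_lt hc hBB
  have hne : padicNorm p (q ^ 2) ≠ padicNorm p (-c) := by
    rw [padicNorm.neg]; exact (ne_of_lt hcq).symm
  have hfc : fc c q = q ^ 2 + -c := by unfold fc; ring
  rw [hfc, padicNorm.add_eq_max_of_ne hne, padicNorm.neg,
    max_eq_left hcq.le, hq2]

private lemma iter_growth {B q : ℚ} (hB : 1 ≤ B) (hc : padicNorm p c ≤ B ^ 2)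
    (hq : B < padicNorm p q) :
    ∀ n : ℕ, 1 ≤ n →
      B < padicNorm p ((fc c)^[n] q) ∧ padicNorm p q < padicNorm p ((fc c)^[n] q) := by
  have step : ∀ r : ℚ, B < padicNorm p r →
      B < padicNorm p (fc c r) ∧ padicNorm p r < padicNorm p (fc c r) := by
    intro r hr
    have h1 : padicNorm p (fc c r) = padicNorm p r ^ 2 := step_growth hB hc hr
    have h2 : padicNorm p r < padicNorm p r ^ 2 := by nlinarith
    exact ⟨h1 ▸ lt_trans hr h2, h1 ▸ h2⟩
  intro n hn
  induction n with
  | zero => omega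
  | succ k ih =>
    rcases Nat.eq_or_lt_of_le hn with h1 | h1
    · rw [← h1]
      simpa using step q hq
    · have hk : 1 ≤ k := by omega
      obtain ⟨ihB, ihq⟩ := ih hk
      rw [Function.iterate_succ_apply']
      obtain ⟨s1, s2⟩ := step _ ihB
      exact ⟨s1, lt_trans ihq s2⟩

private lemma no_periodic {B q : ℚ} (hB : 1 ≤ B) (hc : padicNorm p c ≤ B ^ 2)
    (hq : B < padicNorm p q) {n : ℕ} (hn : 1 ≤ n) : (fc c)^[n] q ≠ q := by
  intro h
  have := (iter_growth hB hc hq n hn).2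
  rw [h] at this
  exact lt_irrefl _ this

private lemma periodic_norm {e : ℕ} (he : 1 ≤ e)
    (hNc : padicNorm p c = (p:ℚ) ^ (2 * e)) {q : ℚ} {n : ℕ} (hn : 1 ≤ n)
    (hq : (fc c)^[n] q = q) : padicNorm p q = (p:ℚ) ^ e := by
  have hp1 : (1:ℚ) < (p:ℚ) := by exact_mod_cast hp.out.one_lt
  have hP1 : (1:ℚ) < (p:ℚ) ^ e := one_lt_pow₀ hp1 (by omega)
  have hcP : padicNorm p c ≤ ((p:ℚ) ^ e) ^ 2 := by
    rw [hNc, ← pow_mul, mul_comm]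
  by_contra hne
  rcases lt_or_gt_of_ne hne with hlt | hgt
  · -- norm small: next iterate has big norm
    have hq2 : padicNorm p (q ^ 2) = padicNorm p q ^ 2 := by rw [sq, sq, padicNorm.mul]
    have hpe : ((p:ℚ) ^ e) ^ 2 = (p:ℚ) ^ (2 * e) := by rw [← pow_mul, mul_comm]
    have hqc : padicNorm p (q ^ 2) < padicNorm p c := by
      rw [hq2, hNc, ← hpe]
      have h0 : 0 ≤ padicNorm p q := padicNorm.nonneg _
      nlinarith
    have hne2 : padicNorm p (q ^ 2) ≠ padicNorm p (-c) := by
      rw [padicNorm.neg]; exact ne_of_lt hqc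
    have hfq : padicNorm p (fc c q) = padicNorm p c := by
      have hfc : fc c q = q ^ 2 + -c := by unfold fc; ring
      rw [hfc, padicNorm.add_eq_max_of_ne hne2, padicNorm.neg, max_eq_right hqc.le]
    have hbig : (p:ℚ) ^ e < padicNorm p (fc c q) := by
      rw [hfq, hNc, two_mul, pow_add]
      nlinarith [pow_pos (lt_trans one_pos hp1) e]
    have hper : (fc c)^[n] (fc c q) = fc c q := by
      rw [← Function.iterate_succ_apply, Function.iterate_succ_apply', hq]
    exact no_periodic (le_of_lt hP1) hcP hbig hn hper
  · exact no_periodic (le_of_lt hP1) hcP hgt hn hq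

private lemma tail_norm {e : ℕ} (he : 1 ≤ e)
    (hNc : padicNorm p c = (p:ℚ) ^ (2 * e)) {q : ℚ}
    (h : padicNorm p (fc c q) = (p:ℚ) ^ e) : padicNorm p q = (p:ℚ) ^ e := by
  have hp1 : (1:ℚ) < (p:ℚ) := by exact_mod_cast hp.out.one_lt
  have hP1 : (1:ℚ) < (p:ℚ) ^ e := one_lt_pow₀ hp1 (by omega)
  have hcP : padicNorm p c ≤ ((p:ℚ) ^ e) ^ 2 := by rw [hNc, ← pow_mul, mul_comm]
  by_contra hne
  rcases lt_or_gt_of_ne hne with hlt | hgt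
  · have hq2 : padicNorm p (q ^ 2) = padicNorm p q ^ 2 := by rw [sq, sq, padicNorm.mul]
    have hpe : ((p:ℚ) ^ e) ^ 2 = (p:ℚ) ^ (2 * e) := by rw [← pow_mul, mul_comm]
    have hqc : padicNorm p (q ^ 2) < padicNorm p c := by
      rw [hq2, hNc, ← hpe]
      have h0 : 0 ≤ padicNorm p q := padicNorm.nonneg _
      nlinarith
    have hne2 : padicNorm p (q ^ 2) ≠ padicNorm p (-c) := by
      rw [padicNorm.neg]; exact ne_of_lt hqc
    have hfq : padicNorm p (fc c q) = padicNorm p c := by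
      have hfc : fc c q = q ^ 2 + -c := by unfold fc; ring
      rw [hfc, padicNorm.add_eq_max_of_ne hne2, padicNorm.neg, max_eq_right hqc.le]
    rw [hfq, hNc] at h
    have : (p:ℚ) ^ e < (p:ℚ) ^ (2 * e) := by
      apply pow_lt_pow_right₀ hp1; omega
    rw [h] at this
    exact lt_irrefl _ this
  · have := step_growth (le_of_lt hP1) hcP hgt
    rw [h] at this
    have h2 : (p:ℚ) ^ e < padicNorm p q ^ 2 := by nlinarith
    rw [← this] at h2
    exact lt_irrefl _ h2

private lemma preper_norm {e : ℕ} (he : 1 ≤ e)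
    (hNc : padicNorm p c = (p:ℚ) ^ (2 * e)) {x : ℚ} (hx : Preper c x) :
    padicNorm p x = (p:ℚ) ^ e := by
  obtain ⟨m, n, hn, h⟩ := hx
  have hper : padicNorm p ((fc c)^[m] x) = (p:ℚ) ^ e := periodic_norm he hNc hn h
  clear h
  induction m with
  | zero => simpa using hper
  | succ k ih =>
    rw [Function.iterate_succ_apply'] at hper
    exact ih (tail_norm he hNc hper)

private lemma periodic_norm' (hNc : padicNorm p c ≤ 1) {q : ℚ} {n : ℕ} (hn : 1 ≤ n)
    (hq : (fc c)^[n] q = q) : padicNorm p q ≤ 1 := by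
  by_contra hgt
  push_neg at hgt
  exact no_periodic le_rfl (by simpa using hNc) hgt hn hq

private lemma tail_norm' (hNc : padicNorm p c ≤ 1) {q : ℚ}
    (h : padicNorm p (fc c q) ≤ 1) : padicNorm p q ≤ 1 := by
  by_contra hgt
  push_neg at hgt
  have := step_growth le_rfl (by simpa using hNc) hgt
  rw [this] at h
  nlinarith

private lemma preper_norm' (hNc : padicNorm p c ≤ 1) {x : ℚ} (hx : Preper c x) :
    padicNorm p x ≤ 1 := by
  obtain ⟨m, n, hn, h⟩ := hx
  have hper : padicNorm p ((fc c)^[m] x) ≤ 1 := periodic_norm' hNc hn h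
  clear h
  induction m with
  | zero => simpa using hper
  | succ k ih =>
    rw [Function.iterate_succ_apply'] at hper
    exact ih (tail_norm' hNc hper)

end norms

section two

variable {p : ℕ} [hp : Fact p.Prime]

private lemma not_dvd_num_of_dvd_den {x : ℚ} (h : p ∣ x.den) : ¬ (p:ℤ) ∣ x.num := by
  intro hn
  have h1 : p ∣ x.num.natAbs := Int.natCast_dvd.mp hn
  have h2 : p ∣ Nat.gcd x.num.natAbs x.den := Nat.dvd_gcd h1 h
  rw [x.reduced] at h2
  exact hp.out.one_lt.ne' (Nat.dvd_one.mp h2)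

private lemma normc_of_dvd {c : ℚ} {d : ℕ} (hd : 0 < d) (hpd : p ∣ d)
    (hden : c.den = d ^ 2) : padicNorm p c = (p:ℚ) ^ (2 * d.factorization p) := by
  have hd1 : d ≠ 1 := by
    rintro rfl
    exact hp.out.one_lt.ne' (Nat.dvd_one.mp hpd)
  have hc0 : c ≠ 0 := by
    rintro rfl
    rw [Rat.den_zero] at hden
    have h2 : d ^ 2 = 1 := hden.symm
    exact hd1 (by nlinarith)
  have hpden : p ∣ c.den := by
    rw [hden]; exact hpd.trans (dvd_pow_self d (by norm_num))
  have hnum : padicValInt p c.num = 0 :=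
    padicValInt.eq_zero_of_not_dvd (not_dvd_num_of_dvd_den hpden)
  have hval : padicValRat p c = -(2 * d.factorization p : ℕ) := by
    rw [padicValRat_def, hnum, hden, padicValNat.pow d 2,
      Nat.factorization_def d hp.out]
    push_cast
    ring
  rw [padicNorm.eq_zpow_of_nonzero hc0, hval, neg_neg, zpow_natCast]

private lemma normc_of_not_dvd {c : ℚ} {d : ℕ} (hd : 0 < d) (hpd : ¬ p ∣ d)
    (hden : c.den = d ^ 2) : padicNorm p c ≤ 1 := by
  by_cases hc0 : c = 0
  · simp [hc0]
  have hpden : ¬ p ∣ c.den := by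
    rw [hden]
    intro h
    exact hpd (hp.out.dvd_of_dvd_pow h)
  have hval : padicValRat p c = padicValInt p c.num := by
    rw [padicValRat_def, padicValNat.eq_zero_of_not_dvd hpden]
    push_cast; ring
  rw [padicNorm.eq_zpow_of_nonzero hc0, hval]
  apply zpow_le_one_of_nonpos₀
  · exact_mod_cast hp.out.one_lt.le
  · omega

private lemma denval_of_norm_eq {x : ℚ} {e : ℕ} (he : 1 ≤ e)
    (h : padicNorm p x = (p:ℚ) ^ e) : padicValNat p x.den = e := by
  have hp0 : (0:ℚ) < (p:ℚ) := by exact_mod_cast hp.out.pos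
  have hp1 : (p:ℚ) ≠ 1 := by exact_mod_cast hp.out.one_lt.ne'
  have hx0 : x ≠ 0 := by
    rintro rfl
    rw [padicNorm.zero] at h
    exact absurd h.symm (ne_of_gt (pow_pos hp0 e))
  rw [padicNorm.eq_zpow_of_nonzero hx0, ← zpow_natCast] at h
  have hv : -padicValRat p x = (e:ℤ) := zpow_right_injective₀ hp0 hp1 h
  by_cases hpden : p ∣ x.den
  · have hnum : padicValInt p x.num = 0 :=
      padicValInt.eq_zero_of_not_dvd (not_dvd_num_of_dvd_den hpden)
    rw [padicValRat_def, hnum] at hv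
    omega
  · rw [padicValRat_def, padicValNat.eq_zero_of_not_dvd hpden] at hv
    omega

private lemma denval_of_norm_le {x : ℚ} (h : padicNorm p x ≤ 1) :
    padicValNat p x.den = 0 := by
  by_cases hpden : p ∣ x.den
  · exfalso
    have hx0 : x ≠ 0 := by
      rintro rfl
      rw [Rat.den_zero] at hpden
      exact hp.out.one_lt.ne' (Nat.dvd_one.mp hpden)
    have hnum : padicValInt p x.num = 0 :=
      padicValInt.eq_zero_of_not_dvd (not_dvd_num_of_dvd_den hpden)
    have hk : 1 ≤ padicValNat p x.den := one_le_padicValNat_of_dvd x.den_nz hpden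
    have hp0 : (0:ℚ) < (p:ℚ) := by exact_mod_cast hp.out.pos
    have hp1 : (1:ℚ) < (p:ℚ) := by exact_mod_cast hp.out.one_lt
    have hv : padicValRat p x = -(padicValNat p x.den : ℤ) := by
      rw [padicValRat_def, hnum]; push_cast; ring
    rw [padicNorm.eq_zpow_of_nonzero hx0, hv, neg_neg, zpow_natCast] at h
    have : (1:ℚ) < (p:ℚ) ^ padicValNat p x.den := one_lt_pow₀ hp1 (by omega)
    linarith
  · exact padicValNat.eq_zero_of_not_dvd hpden

end two

section three

variable {c : ℚ} {d : ℕ}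

private lemma preper_den (hd : 0 < d) (hden : c.den = d ^ 2) {x : ℚ}
    (hx : Preper c x) : x.den = d := by
  apply Nat.eq_of_factorization_eq x.den_nz hd.ne'
  intro p
  by_cases hp : p.Prime
  · haveI : Fact p.Prime := ⟨hp⟩
    rw [Nat.factorization_def _ hp, Nat.factorization_def _ hp]
    by_cases hpd : p ∣ d
    · have he : 1 ≤ d.factorization p :=
        (Nat.Prime.factorization_pos_of_dvd hp hd.ne' hpd)
      have hnorm := preper_norm he (normc_of_dvd hd hpd hden) hx
      rw [denval_of_norm_eq he hnorm, Nat.factorization_def _ hp]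
    · have hnorm := preper_norm' (normc_of_not_dvd hd hpd hden) hx
      rw [denval_of_norm_le hnorm, padicValNat.eq_zero_of_not_dvd hpd]
  · rw [Nat.factorization_eq_zero_of_not_prime _ hp,
      Nat.factorization_eq_zero_of_not_prime _ hp]

private lemma num_identity (hd : 0 < d) (hden : c.den = d ^ 2) {x : ℚ}
    (hx : Preper c x) : x.num ^ 2 - c.num = (fc c x).num * d := by
  have hxd : x.den = d := preper_den hd hden hx
  have hfd : (fc c x).den = d := preper_den hd hden (preper_step hx)
  have hdq : (d:ℚ) ≠ 0 := by exact_mod_cast hd.ne'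
  have e1 : (x.num : ℚ) = x * d := by
    rw [← hxd]
    exact (div_eq_iff (by exact_mod_cast x.den_nz)).mp (Rat.num_div_den x)
  have ef : ((fc c x).num : ℚ) = fc c x * d := by
    rw [← hfd]
    exact (div_eq_iff (by exact_mod_cast (fc c x).den_nz)).mp (Rat.num_div_den (fc c x))
  have ec : (c.num : ℚ) = c * ((d:ℚ)) ^ 2 := by
    have h2 : ((c.den : ℚ)) = ((d:ℚ)) ^ 2 := by rw [hden]; push_cast; ring
    have := (div_eq_iff (by exact_mod_cast c.den_nz)).mp (Rat.num_div_den c)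
    rw [this, h2]
  have key : (x.num : ℚ) ^ 2 - (c.num : ℚ) = ((fc c x).num : ℚ) * d := by
    rw [e1, ec, ef]
    unfold fc
    ring
  exact_mod_cast key


private lemma dichotomy (hd : 0 < d) (h4 : 4 ∣ d) (hden : c.den = d ^ 2)
    {x y : ℚ} (hx : Preper c x) (hy : Preper c y) {p : ℕ} (hp : p.Prime) (hpd : p ∣ d) :
    (p:ℤ) ^ d.factorization p ∣ (x.num - y.num) ∨
      (p:ℤ) ^ d.factorization p ∣ (x.num + y.num) := by
  haveI : Fact p.Prime := ⟨hp⟩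
  have h2d : 2 ∣ d := dvd_trans (by norm_num) h4
  set e := d.factorization p with he_def
  set a := x.num with ha_def
  set b := y.num with hb_def
  have hxd : x.den = d := preper_den hd hden hx
  have hyd : y.den = d := preper_den hd hden hy
  have hfxd : (fc c x).den = d := preper_den hd hden (preper_step hx)
  have hfyd : (fc c y).den = d := preper_den hd hden (preper_step hy)
  have hA : a ^ 2 - c.num = (fc c x).num * d := num_identity hd hden hx
  have hB : b ^ 2 - c.num = (fc c y).num * d := num_identity hd hden hy
  have hdiff : (a - b) * (a + b) = ((fc c x).num - (fc c y).num) * d := by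
    linear_combination hA - hB
  have hpe_d : (p:ℤ) ^ e ∣ (d:ℤ) := by
    have := Nat.ordProj_dvd d p
    exact_mod_cast this
  have hpa : ¬ (p:ℤ) ∣ a := not_dvd_num_of_dvd_den (hxd ▸ hpd)
  have hpb : ¬ (p:ℤ) ∣ b := not_dvd_num_of_dvd_den (hyd ▸ hpd)
  have hpint : Prime (p:ℤ) := Nat.prime_iff_prime_int.mp hp
  by_cases hp2 : p = 2
  · -- p = 2
    subst hp2
    have he2 : 2 ≤ e := by
      rw [he_def]
      exact (Nat.Prime.pow_dvd_iff_le_factorization hp hd.ne').mp (by norm_num; exact h4)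
    have hfa : ¬ (2:ℤ) ∣ (fc c x).num := not_dvd_num_of_dvd_den (hfxd ▸ h2d)
    have hfb : ¬ (2:ℤ) ∣ (fc c y).num := not_dvd_num_of_dvd_den (hfyd ▸ h2d)
    have heven : (2:ℤ) ∣ ((fc c x).num - (fc c y).num) := by
      rcases Int.even_or_odd ((fc c x).num) with h | h
      · exact absurd h.two_dvd hfa
      rcases Int.even_or_odd ((fc c y).num) with h' | h'
      · exact absurd h'.two_dvd hfb
      exact (h.sub_odd h').two_dvd
    have h2e1 : (2:ℤ) ^ (e + 1) ∣ (a - b) * (a + b) := by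
      rw [hdiff, pow_succ, mul_comm ((2:ℤ)^e) 2]
      exact mul_dvd_mul heven hpe_d
    have haodd : ¬ (2:ℤ) ∣ a := hpa
    have hbodd : ¬ (2:ℤ) ∣ b := hpb
    have hnot44 : ¬ ((4:ℤ) ∣ (a - b) ∧ (4:ℤ) ∣ (a + b)) := by
      rintro ⟨h1, h2⟩
      have : (4:ℤ) ∣ 2 * a := by
        have : 2 * a = (a - b) + (a + b) := by ring
        rw [this]; exact dvd_add h1 h2
      have : (2:ℤ) ∣ a := by omega
      exact haodd this
    have habsub : (2:ℤ) ∣ a - b := by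
      rcases Int.even_or_odd a with h | h
      · exact absurd h.two_dvd haodd
      rcases Int.even_or_odd b with h' | h'
      · exact absurd h'.two_dvd hbodd
      exact (h.sub_odd h').two_dvd
    have habadd : (2:ℤ) ∣ a + b := by
      obtain ⟨k, hk⟩ := habsub
      exact ⟨k + b, by omega⟩
    by_cases h4ab : (4:ℤ) ∣ a + b
    · -- then ¬ 4 ∣ a - b, conclude 2^e ∣ a + b
      right
      have hn4 : ¬ (4:ℤ) ∣ (a - b) := fun hcon => hnot44 ⟨hcon, h4ab⟩
      obtain ⟨u, hu⟩ := habsub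
      have huodd : ¬ (2:ℤ) ∣ u := by
        intro ⟨v, hv⟩
        exact hn4 ⟨v, by omega⟩
      have hco : IsCoprime ((2:ℤ) ^ e) u :=
        ((hpint.coprime_iff_not_dvd).mpr huodd).pow_left
      have hstep : (2:ℤ) ^ e ∣ u * (a + b) := by
        have h' : (2:ℤ) * (2:ℤ) ^ e ∣ (2:ℤ) * (u * (a + b)) := by
          have : (2:ℤ) * (u * (a + b)) = (a - b) * (a + b) := by rw [hu]; ring
          rw [this, ← pow_succ']
          exact h2e1
        exact (mul_dvd_mul_iff_left (by norm_num : (2:ℤ) ≠ 0)).mp h'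
      exact hco.dvd_of_dvd_mul_left hstep
    · -- ¬ 4 ∣ a + b, conclude 2^e ∣ a - b
      left
      obtain ⟨u, hu⟩ := habadd
      have huodd : ¬ (2:ℤ) ∣ u := by
        intro ⟨v, hv⟩
        exact h4ab ⟨v, by omega⟩
      have hco : IsCoprime ((2:ℤ) ^ e) u :=
        ((hpint.coprime_iff_not_dvd).mpr huodd).pow_left
      have hstep : (2:ℤ) ^ e ∣ (a - b) * u := by
        have h' : (2:ℤ) * (2:ℤ) ^ e ∣ (2:ℤ) * ((a - b) * u) := by
          have heq : (2:ℤ) * ((a - b) * u) = (a - b) * (a + b) := by rw [hu]; ring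
          rw [heq, ← pow_succ']
          exact h2e1
        exact (mul_dvd_mul_iff_left (by norm_num : (2:ℤ) ≠ 0)).mp h'
      exact hco.dvd_of_dvd_mul_right hstep
  · -- p odd
    have hdvd : (p:ℤ) ^ e ∣ (a - b) * (a + b) := by
      rw [hdiff]
      exact hpe_d.mul_left _
    have hnotboth : ¬ ((p:ℤ) ∣ (a - b) ∧ (p:ℤ) ∣ (a + b)) := by
      rintro ⟨h1, h2⟩
      have h2a : (p:ℤ) ∣ 2 * a := by
        have heq : 2 * a = (a - b) + (a + b) := by ring
        rw [heq]; exact dvd_add h1 h2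
      rcases hpint.dvd_mul.mp h2a with h | h
      · have hpn : p ∣ 2 := by exact_mod_cast h
        exact hp2 ((Nat.prime_dvd_prime_iff_eq hp Nat.prime_two).mp hpn)
      · exact hpa h
    by_cases hpab : (p:ℤ) ∣ a + b
    · right
      have hnp : ¬ (p:ℤ) ∣ (a - b) := fun hcon => hnotboth ⟨hcon, hpab⟩
      have hco : IsCoprime ((p:ℤ) ^ e) (a - b) :=
        ((hpint.coprime_iff_not_dvd).mpr hnp).pow_left
      exact hco.dvd_of_dvd_mul_left hdvd
    · left
      have hco : IsCoprime ((p:ℤ) ^ e) (a + b) :=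
        ((hpint.coprime_iff_not_dvd).mpr hpab).pow_left
      exact hco.dvd_of_dvd_mul_right hdvd

end three

/-- Let `den c = d²` with `4 ∣ d`, `d > 0`, and `s` the number of distinct
primes dividing `d`. Then the numerators of the rational preperiodic points of
`φ_c(t) = t² - c` occupy at most `2^s` residue classes modulo `d`. -/
theorem stmt_11 (c : ℚ) (d : ℕ) (hd : 0 < d) (h4 : 4 ∣ d) (hden : c.den = d ^ 2) :
    ((fun x : ℚ => ((x.num : ZMod d))) ''
        {x : ℚ | ∃ m : ℕ, ∃ n : ℕ, 1 ≤ n ∧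
          (fun t : ℚ => t ^ 2 - c)^[n] ((fun t : ℚ => t ^ 2 - c)^[m] x) =
            (fun t : ℚ => t ^ 2 - c)^[m] x}).ncard ≤ 2 ^ d.primeFactors.card := by
  classical
  haveI : NeZero d := ⟨hd.ne'⟩
  set h : ℚ → ZMod d := fun x : ℚ => ((x.num : ZMod d)) with hh
  set T : Set ℚ := {x : ℚ | ∃ m : ℕ, ∃ n : ℕ, 1 ≤ n ∧
          (fun t : ℚ => t ^ 2 - c)^[n] ((fun t : ℚ => t ^ 2 - c)^[m] x) =
            (fun t : ℚ => t ^ 2 - c)^[m] x} with hTdef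
  have hpre : ∀ x ∈ T, Preper c x := fun x hx => hx
  rcases T.eq_empty_or_nonempty with hT | ⟨x0, hx0⟩
  · rw [hT]
    simp
  have hx0p : Preper c x0 := hpre x0 hx0
  set G : ℚ → (↥d.primeFactors → Bool) := fun x pp =>
    decide (((pp : ℕ) : ℤ) ^ d.factorization (pp : ℕ) ∣ (x.num - x0.num)) with hG
  -- if the sign vectors agree, the residues agree
  have hfac : ∀ x ∈ T, ∀ y ∈ T, G x = G y → h x = h y := by
    intro x hx y hy hGxy
    have hdvd : (d:ℤ) ∣ x.num - y.num := by
      have h1 : (∏ p ∈ d.primeFactors, p ^ d.factorization p) = d :=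
        Nat.factorization_prod_pow_eq_self hd.ne'
      have hprod : ((d:ℤ)) = ∏ p ∈ d.primeFactors, (p:ℤ) ^ d.factorization p := by
        conv_lhs => rw [← h1]
        push_cast
        rfl
      rw [hprod]
      apply Finset.prod_dvd_of_coprime
      · intro p hp q hq hne
        have hpp := Nat.prime_of_mem_primeFactors (Finset.mem_coe.mp hp)
        have hqp := Nat.prime_of_mem_primeFactors (Finset.mem_coe.mp hq)
        have : IsCoprime ((p:ℤ)) ((q:ℤ)) := by
          rw [Int.isCoprime_iff_gcd_eq_one, Int.gcd_natCast_natCast]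
          exact (Nat.coprime_primes hpp hqp).mpr hne
        exact (this.pow : IsCoprime _ _)
      · intro p hp
        have hpp := Nat.prime_of_mem_primeFactors hp
        have hpd := Nat.dvd_of_mem_primeFactors hp
        have d1 := dichotomy hd h4 hden (hpre x hx) hx0p hpp hpd
        have d2 := dichotomy hd h4 hden (hpre y hy) hx0p hpp hpd
        have hGp : ((p:ℤ) ^ d.factorization p ∣ (x.num - x0.num)) ↔
            ((p:ℤ) ^ d.factorization p ∣ (y.num - x0.num)) := by
          have := congrFun hGxy ⟨p, hp⟩
          simpa [hG] using decide_eq_decide.mp this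
        by_cases hx1 : (p:ℤ) ^ d.factorization p ∣ (x.num - x0.num)
        · have hy1 := hGp.mp hx1
          have := dvd_sub hx1 hy1
          simpa using this
        · have hy1 : ¬ (p:ℤ) ^ d.factorization p ∣ (y.num - x0.num) := fun hcon =>
            hx1 (hGp.mpr hcon)
          have hx2 := d1.resolve_left hx1
          have hy2 := d2.resolve_left hy1
          have := dvd_sub hx2 hy2
          simpa using this
    show ((x.num : ZMod d)) = ((y.num : ZMod d))
    have : ((x.num - y.num : ℤ) : ZMod d) = 0 := by
      rw [ZMod.intCast_zmod_eq_zero_iff_dvd]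
      exact_mod_cast hdvd
    push_cast at this
    exact sub_eq_zero.mp this
  have hinj : Set.InjOn (fun r => G (Function.invFunOn h T r)) (h '' T) := by
    rintro r1 hr1 r2 hr2 heq
    obtain ⟨x1, hx1T, hx1r⟩ := hr1
    obtain ⟨x2, hx2T, hx2r⟩ := hr2
    have e1 : ∃ a ∈ T, h a = r1 := ⟨x1, hx1T, hx1r⟩
    have e2 : ∃ a ∈ T, h a = r2 := ⟨x2, hx2T, hx2r⟩
    have m1 : Function.invFunOn h T r1 ∈ T := Function.invFunOn_mem e1
    have m2 : Function.invFunOn h T r2 ∈ T := Function.invFunOn_mem e2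
    have f1 : h (Function.invFunOn h T r1) = r1 := Function.invFunOn_eq e1
    have f2 : h (Function.invFunOn h T r2) = r2 := Function.invFunOn_eq e2
    rw [← f1, ← f2]
    exact hfac _ m1 _ m2 heq
  calc (h '' T).ncard ≤ (Set.univ : Set (↥d.primeFactors → Bool)).ncard :=
        Set.ncard_le_ncard_of_injOn _ (fun a _ => Set.mem_univ _) hinj Set.finite_univ
    _ = 2 ^ d.primeFactors.card := by
        rw [Set.ncard_univ, Nat.card_eq_fintype_card, Fintype.card_fun]
        simp [Fintype.card_coe]
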